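/- Let p be a prime number and let Δ be a finite-dimensional division algebra over ℚ whose center K satisfies [K:ℚ] = 2 and with dim_K Δ = p^2. Suppose there is an isomorphism of ℝ-algebras α : Δ ⊗_ℚ ℝ ≅ M_p(ℂ) (the p×p complex matrices, viewed as an ℝ-algebra). Let g₁, g₂ ∈ Δ with g₁·g₂ ≠ g₂·g₁. Then every ℂ-linear subspace H of ℂ^p satisfying α(g₁ ⊗ 1)·H ⊆ H and α(g₂ ⊗ 1)·H ⊆ H is either the zero subspace or all of ℂ^p. -/

import Mathlib

/-!
The elements `d ∈ Δ` whose matrices `α (1 ⊗ d)` stabilize `H` form a `ℚ`-subalgebra containing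
`g₁`, `g₂` and the centre `K` (central elements go to central, i.e. scalar, matrices). In a division
algebra of dimension `p²` over `K` the dimensions of subalgebras divide `p²`, so the strict chain
`K < K[g₁] < K[g₁, g₂]` forces `K[g₁, g₂] = Δ`. Hence `H` is stable under the `ℝ`-span of the image
of `Δ`, which is all of `M_p(ℂ)`, and only `0` and `ℂ^p` are stable under every matrix.
-/

open scoped TensorProduct

open Module Matrix

theorem Nat.eq_sq_of_one_lt_of_lt_of_dvd_sq {p a b : ℕ} (hp : p.Prime) (ha : a ∣ p ^ 2)
    (hb : b ∣ p ^ 2) (h1a : 1 < a) (hab : a < b) : b = p ^ 2 := by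
  obtain ⟨i, -, rfl⟩ := (Nat.dvd_prime_pow hp).1 ha
  obtain ⟨j, hj, rfl⟩ := (Nat.dvd_prime_pow hp).1 hb
  have hi : i ≠ 0 := by rintro rfl; simp at h1a
  have hij : i < j := (Nat.pow_lt_pow_iff_right hp.one_lt).1 hab
  rw [show j = 2 by omega]

section DivisionAlgebra

variable {K D : Type*} [Field K] [DivisionRing D] [Algebra K D] [FiniteDimensional K D]

theorem Subalgebra.finrank_dvd_finrank (T : Subalgebra K D) : finrank K T ∣ finrank K D := by
  let : DivisionRing T := divisionRingOfFiniteDimensional K T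
  exact ⟨_, (Module.finrank_mul_finrank K T D).symm⟩

theorem Subalgebra.finrank_lt_finrank_of_lt {S T : Subalgebra K D} (h : S < T) :
    finrank K S < finrank K T :=
  Submodule.finrank_lt_finrank_of_lt (s := toSubmodule S) (t := toSubmodule T) h

theorem Subalgebra.eq_top_of_bot_lt_of_lt {p : ℕ} (hp : p.Prime) (hdim : finrank K D = p ^ 2)
    {L S : Subalgebra K D} (hL : ⊥ < L) (hLS : L < S) : S = ⊤ := by
  have hS : finrank K S = finrank K D := hdim ▸ Nat.eq_sq_of_one_lt_of_lt_of_dvd_sq hp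
    (hdim ▸ L.finrank_dvd_finrank) (hdim ▸ S.finrank_dvd_finrank)
    (Subalgebra.finrank_bot (F := K) (E := D) ▸ finrank_lt_finrank_of_lt hL)
    (finrank_lt_finrank_of_lt hLS)
  exact Algebra.toSubmodule_eq_top.1 (Submodule.eq_top_of_finrank_eq hS)

theorem Algebra.adjoin_pair_eq_top_of_not_commute {p : ℕ} (hp : p.Prime)
    (hdim : finrank K D = p ^ 2) {g₁ g₂ : D} (hg : g₁ * g₂ ≠ g₂ * g₁) :
    adjoin K {g₁, g₂} = ⊤ := by
  have hg₁ : g₁ ∈ adjoin K {g₁} := subset_adjoin rfl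
  refine Subalgebra.eq_top_of_bot_lt_of_lt hp hdim (L := adjoin K {g₁}) ?_ ?_
  · refine SetLike.lt_iff_le_and_exists.2 ⟨bot_le, g₁, hg₁, fun h => ?_⟩
    obtain ⟨k, rfl⟩ := mem_bot.1 h
    exact hg (commutes k g₂)
  · refine SetLike.lt_iff_le_and_exists.2 ⟨adjoin_mono (by simp), g₂, subset_adjoin (by simp),
      fun h => hg (commute_of_mem_adjoin_self h).eq⟩

end DivisionAlgebra

section Center

variable {R D : Type*} [CommRing R] [DivisionRing D] [Algebra R D]

instance Subalgebra.center.instField : Field (Subalgebra.center R D) :=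
  inferInstanceAs (Field (Subring.center D))

instance Subalgebra.center.instAlgebra : Algebra (Subalgebra.center R D) D :=
  inferInstanceAs (Algebra (Subring.center D) D)

theorem Algebra.adjoin_center_union_pair_eq_top {p : ℕ} (hp : p.Prime)
    (hdim : finrank (Subalgebra.center R D) D = p ^ 2) {g₁ g₂ : D} (hg : g₁ * g₂ ≠ g₂ * g₁) :
    adjoin R ((Subalgebra.center R D : Set D) ∪ {g₁, g₂}) = ⊤ := by
  have : FiniteDimensional (Subalgebra.center R D) D :=
    Module.finite_of_finrank_pos (hdim ▸ pow_pos hp.pos 2)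
  have hrange : (IsScalarTower.toAlgHom R (Subalgebra.center R D) D).range =
      Subalgebra.center R D := by
    ext x
    exact ⟨fun ⟨z, hz⟩ => hz ▸ z.2, fun hx => ⟨⟨x, hx⟩, rfl⟩⟩
  have h := congrArg (Subalgebra.restrictScalars R) (adjoin_pair_eq_top_of_not_commute hp hdim hg)
  rwa [Subalgebra.restrictScalars_adjoin, hrange, Subalgebra.restrictScalars_top,
    ← adjoin_eq (Subalgebra.center R D), ← adjoin_union] at h

end Center

theorem Algebra.TensorProduct.one_tmul_mem_center {R A B : Type*} [CommSemiring R] [Semiring A]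
    [Semiring B] [Algebra R A] [Algebra R B] {z : B} (hz : z ∈ Set.center B) :
    (1 : A) ⊗ₜ[R] z ∈ Set.center (A ⊗[R] B) := by
  rw [Semigroup.mem_center_iff] at hz ⊢
  intro x
  induction x using TensorProduct.induction_on with
  | zero => simp
  | tmul a b => simp [hz b]
  | add x y hx hy => rw [add_mul, mul_add, hx, hy]

section MatrixStabilizer

variable {R K n : Type*} [CommSemiring R] [Field K] [Fintype n] [DecidableEq n]

def Submodule.matrixStabilizer (H : Submodule R (n → R)) : Subalgebra R (Matrix n n R) where
  carrier := {M | ∀ v ∈ H, M *ᵥ v ∈ H}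
  mul_mem' hA hB v hv := by rw [← mulVec_mulVec]; exact hA _ (hB v hv)
  add_mem' hA hB v hv := by rw [add_mulVec]; exact H.add_mem (hA v hv) (hB v hv)
  algebraMap_mem' c v hv := by
    rw [Algebra.algebraMap_eq_smul_one, smul_mulVec, one_mulVec]
    exact H.smul_mem c hv

theorem Submodule.center_subset_matrixStabilizer (H : Submodule R (n → R)) :
    Set.center (Matrix n n R) ⊆ H.matrixStabilizer := by
  rw [center_eq_range]
  rintro _ ⟨c, rfl⟩
  exact H.matrixStabilizer.algebraMap_mem c

theorem Submodule.eq_bot_or_eq_top_of_matrixStabilizer_eq_top {H : Submodule K (n → K)}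
    (h : H.matrixStabilizer = ⊤) : H = ⊥ ∨ H = ⊤ := by
  refine or_iff_not_imp_left.2 fun hH => eq_top_iff.2 fun w _ => ?_
  obtain ⟨v, hv, hv0⟩ := H.ne_bot_iff.1 hH
  obtain ⟨i, hi⟩ : ∃ i, v i ≠ 0 := Function.ne_iff.1 hv0
  have hw : vecMulVec w (Pi.single i (v i)⁻¹) *ᵥ v = w := by
    simp [vecMulVec_mulVec, hi]
  exact hw ▸ (h ▸ Algebra.mem_top : _ ∈ H.matrixStabilizer) v hv

end MatrixStabilizer

theorem invariant_subspace_trivial_of_not_commute_general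
    (p : ℕ) (hp : p.Prime)
    (Δ : Type*) [DivisionRing Δ] [Algebra ℚ Δ]
    (hdim : Module.finrank (Subalgebra.center ℚ Δ) Δ = p ^ 2)
    (α : (ℝ ⊗[ℚ] Δ) ≃ₐ[ℝ] Matrix (Fin p) (Fin p) ℂ)
    (g₁ g₂ : Δ) (hg : g₁ * g₂ ≠ g₂ * g₁)
    (H : Submodule ℂ (Fin p → ℂ))
    (h₁ : ∀ v ∈ H, (α ((1 : ℝ) ⊗ₜ[ℚ] g₁)).mulVec v ∈ H)
    (h₂ : ∀ v ∈ H, (α ((1 : ℝ) ⊗ₜ[ℚ] g₂)).mulVec v ∈ H) :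
    H = ⊥ ∨ H = ⊤ := by
  let B : Subalgebra ℝ (ℝ ⊗[ℚ] Δ) := (H.matrixStabilizer.restrictScalars ℝ).comap α.toAlgHom
  have hgen : ∀ d ∈ (Subalgebra.center ℚ Δ : Set Δ) ∪ {g₁, g₂}, (1 : ℝ) ⊗ₜ[ℚ] d ∈ B := by
    rintro d (hd | rfl | rfl)
    · exact H.center_subset_matrixStabilizer (MulEquivClass.apply_mem_center α
        (Algebra.TensorProduct.one_tmul_mem_center hd))
    · exact h₁
    · exact h₂
  have hB : B = ⊤ := by
    rw [eq_top_iff, ← Algebra.TensorProduct.adjoin_one_tmul_image_eq_top _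
      (Algebra.adjoin_center_union_pair_eq_top hp hdim hg)]
    exact Algebra.adjoin_le (Set.image_subset_iff.2 hgen)
  refine H.eq_bot_or_eq_top_of_matrixStabilizer_eq_top (eq_top_iff.2 fun M _ => ?_)
  exact α.apply_symm_apply M ▸ (hB ▸ Algebra.mem_top : α.symm M ∈ B)

/-- Let `p` be a prime and `Δ` a finite-dimensional division algebra
over `ℚ` whose center `K` satisfies `[K : ℚ] = 2` and `dim_K Δ = p ^ 2`.  Suppose
`α : Δ ⊗_ℚ ℝ ≅ M_p(ℂ)` is an isomorphism of `ℝ`-algebras.  If `g₁ g₂ ∈ Δ` do not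
commute, then every `ℂ`-subspace `H ⊆ ℂ^p` stable under the matrices `α (g₁ ⊗ 1)`
and `α (g₂ ⊗ 1)` is either `⊥` or `⊤`. -/
theorem invariant_subspace_trivial_of_not_commute
    (p : ℕ) (hp : p.Prime)
    (Δ : Type*) [DivisionRing Δ] [Algebra ℚ Δ] [FiniteDimensional ℚ Δ]
    (hK : Module.finrank ℚ (Subalgebra.center ℚ Δ) = 2)
    (hdim : Module.finrank (Subalgebra.center ℚ Δ) Δ = p ^ 2)
    (α : (ℝ ⊗[ℚ] Δ) ≃ₐ[ℝ] Matrix (Fin p) (Fin p) ℂ)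
    (g₁ g₂ : Δ) (hg : g₁ * g₂ ≠ g₂ * g₁)
    (H : Submodule ℂ (Fin p → ℂ))
    (h₁ : ∀ v ∈ H, (α ((1 : ℝ) ⊗ₜ[ℚ] g₁)).mulVec v ∈ H)
    (h₂ : ∀ v ∈ H, (α ((1 : ℝ) ⊗ₜ[ℚ] g₂)).mulVec v ∈ H) :
    H = ⊥ ∨ H = ⊤ :=
  invariant_subspace_trivial_of_not_commute_general p hp Δ hdim α g₁ g₂ hg H h₁ h₂
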